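/- arXiv:math/0405460 — 4 statements merged into one kernel-verified Lean document; each statement's English description precedes it below -/
import Mathlib

section
/- For the 2×2 integer matrices S = [[1,2],[0,-1]], T = [[-1,0],[2,1]], U = [[0,-1],[1,2]], any n ≥ 1, and all α, β ∈ ℤ/pℤ, the second coordinate of the row vector (α,β)·S·(TS)^(n-1)·U equals β if and only if (2n+1)·(α−β) = 0 in ℤ/pℤ. -/
open Matrix

/-- The three 2×2 integer matrices from the coloring computation. -/
noncomputable def Smat : Matrix (Fin 2) (Fin 2) ℤ := !![1, 2; 0, -1]
noncomputable def Tmat : Matrix (Fin 2) (Fin 2) ℤ := !![-1, 0; 2, 1]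
noncomputable def Umat : Matrix (Fin 2) (Fin 2) ℤ := !![0, -1; 1, 2]

lemma TS_pow (k : ℕ) : (Tmat * Smat) ^ k =
    !![1 - 2*(k:ℤ), -2*(k:ℤ); 2*(k:ℤ), 1 + 2*(k:ℤ)] := by
  induction k with
  | zero => simp [Matrix.one_fin_two]
  | succ m ih =>
      rw [pow_succ, ih, Tmat, Smat]
      ext i j
      fin_cases i <;> fin_cases j <;>
        simp [Matrix.mul_apply, Fin.sum_univ_two] <;> push_cast <;> ring

lemma key (k : ℕ) : Smat * (Tmat * Smat) ^ k * Umat =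
    !![2*(k:ℤ) + 2, 2*(k:ℤ) + 3; -2*(k:ℤ) - 1, -2*(k:ℤ) - 2] := by
  rw [TS_pow, Smat, Umat]
  ext i j
  fin_cases i <;> fin_cases j <;>
    simp [Matrix.mul_apply, Fin.sum_univ_two] <;> ring

/-- For all `α, β ∈ ℤ/pℤ`, the second coordinate of the row vector
`(α,β)·S·(TS)^(n-1)·U` equals `β` iff `(2n+1)(α-β) = 0` in `ℤ/pℤ`. -/
theorem stmt_0 (p : ℕ) (hp : 1 < p) (n : ℕ) (hn : 1 ≤ n) (α β : ZMod p) :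
    (!![α, β] *
        ((Smat * (Tmat * Smat) ^ (n - 1) * Umat).map (Int.cast : ℤ → ZMod p))) 0 1 = β ↔
      (2 * n + 1 : ZMod p) * (α - β) = 0 := by
  obtain ⟨k, rfl⟩ : ∃ k, n = k + 1 := ⟨n - 1, (Nat.succ_pred_eq_of_pos hn).symm⟩
  rw [Nat.add_sub_cancel, key]
  simp only [Matrix.mul_apply, Fin.sum_univ_two, Matrix.map_apply]
  norm_num
  push_cast
  constructor <;> intro h <;> linear_combination h
end

section
/- The polynomials u²v − u + 1, u²v + uv² − u − v + 1, and uv² − v + 1 in ℤ[u,v] are pairwise non-associate up to multiplication by units and monomials: no two of them are related by f = ± u^i v^j · g in the Laurent polynomial ring ℤ[u^{±1}, v^{±1}]. -/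
/-!
Multiplying by `± u^i v^j` is multiplying by a unit, so monomially associated Laurent
polynomials have associated images under every ring homomorphism to `ℤ`, i.e. images of equal
absolute value. Evaluating at `(u, v) = (-1, 1)` gives `3, 1, -1` for the three polynomials, and
at `(1, -1)` gives `-1, 1, 3`; together these separate all three pairs.
-/

/-- The two-variable Laurent polynomial ring `ℤ[u^{±1}, v^{±1}]`. -/
abbrev Laurent2 : Type := AddMonoidAlgebra ℤ (ℤ × ℤ)

/-- The monomial `u^i v^j`. -/
noncomputable def mono (i j : ℤ) : Laurent2 := AddMonoidAlgebra.single (i, j) 1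

/-- `u²v − u + 1`. -/
noncomputable def poly1 : Laurent2 := mono 2 1 - mono 1 0 + 1
/-- `u²v + uv² − u − v + 1`. -/
noncomputable def poly2 : Laurent2 := mono 2 1 + mono 1 2 - mono 1 0 - mono 0 1 + 1
/-- `uv² − v + 1`. -/
noncomputable def poly3 : Laurent2 := mono 1 2 - mono 0 1 + 1

/-- `f` and `g` are associate up to multiplication by a sign and a monomial
`± u^i v^j` in `ℤ[u^{±1}, v^{±1}]`. -/
def MonomialAssociated (f g : Laurent2) : Prop :=
  ∃ i j : ℤ, f = mono i j * g ∨ f = -(mono i j * g)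

open AddMonoidAlgebra

theorem mono_mul_mono (i j k l : ℤ) : mono i j * mono k l = mono (i + k) (j + l) := by
  simp [mono, single_mul_single]

theorem isUnit_mono (i j : ℤ) : IsUnit (mono i j) :=
  IsUnit.of_mul_eq_one (mono (-i) (-j)) <| by
    rw [mono_mul_mono, add_neg_cancel, add_neg_cancel]
    rfl

theorem MonomialAssociated.associated {f g : Laurent2} (h : MonomialAssociated f g) :
    Associated g f := by
  obtain ⟨i, j, rfl | rfl⟩ := h
  · exact ⟨(isUnit_mono i j).unit, mul_comm _ _⟩
  · exact ⟨(isUnit_mono i j).neg.unit, by simp [mul_comm]⟩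

section Eval

variable {R : Type*} [CommRing R]

noncomputable def evalUnits (a b : Rˣ) : Laurent2 →+* R :=
  (AddMonoidAlgebra.lift ℤ R (ℤ × ℤ)
    { toFun := fun x => ((a ^ x.toAdd.1 * b ^ x.toAdd.2 : Rˣ) : R)
      map_one' := by simp
      map_mul' := fun x y => by
        simp only [toAdd_mul, Prod.fst_add, Prod.snd_add, zpow_add]
        push_cast
        ring }).toRingHom

@[simp]
theorem evalUnits_mono (a b : Rˣ) (i j : ℤ) :
    evalUnits a b (mono i j) = ((a ^ i * b ^ j : Rˣ) : R) := by
  simp [evalUnits, mono]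

theorem evalUnits_poly1 (a b : Rˣ) : evalUnits a b poly1 = a ^ 2 * b - a + 1 := by
  simp [poly1]

theorem evalUnits_poly2 (a b : Rˣ) : evalUnits a b poly2 = a ^ 2 * b + a * b ^ 2 - a - b + 1 := by
  simp [poly2]

theorem evalUnits_poly3 (a b : Rˣ) : evalUnits a b poly3 = a * b ^ 2 - b + 1 := by
  simp [poly3]

end Eval

theorem MonomialAssociated.natAbs_evalUnits_eq {f g : Laurent2} (h : MonomialAssociated f g)
    (a b : ℤˣ) : (evalUnits a b f).natAbs = (evalUnits a b g).natAbs :=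
  Int.natAbs_eq_iff_associated.2 (h.associated.map (evalUnits a b)).symm

/-- The polynomials `u²v − u + 1`, `u²v + uv² − u − v + 1` and `uv² − v + 1`
are pairwise non-associate up to signs and monomials in `ℤ[u^{±1}, v^{±1}]`. -/
theorem stmt_3 :
    ¬ MonomialAssociated poly1 poly2 ∧ ¬ MonomialAssociated poly1 poly3 ∧
      ¬ MonomialAssociated poly2 poly3 := by
  refine ⟨fun h => ?_, fun h => ?_, fun h => ?_⟩
  · simpa [evalUnits_poly1, evalUnits_poly2] using h.natAbs_evalUnits_eq (-1) 1
  · simpa [evalUnits_poly1, evalUnits_poly3] using h.natAbs_evalUnits_eq (-1) 1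
  · simpa [evalUnits_poly2, evalUnits_poly3] using h.natAbs_evalUnits_eq 1 (-1)
end

section
/- Let M be the ℤ[t^{±1}]-module presented by the single relation t²·x = x + t·x on one generator x (i.e., ℤ[t^{±1}]/(t² − t − 1)). Then M is a cyclic module whose 0th characteristic polynomial (order ideal generator) is t² − t − 1, and the direct sum M ⊕ M is not a cyclic ℤ[t^{±1}]-module. -/
/-!
`M = ℤ[t^{±1}]/(t² − t − 1)` is generated by `1`, and its annihilator is the ideal it is the
quotient by. Since `t² − t − 1` vanishes at the golden ratio it is not a unit, so `M` is a nonzero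
commutative ring; then `M × M` is not cyclic, because from `(1, 0) = r • (a, b)` and
`(0, 1) = s • (a, b)` one gets `1 = (r a)(s b) = (r b)(s a) = 0`.
-/

open LaurentPolynomial

/-- `t² − t − 1` in `ℤ[t^{±1}]`. -/
noncomputable def fib : LaurentPolynomial ℤ := T 2 - T 1 - 1

theorem Ideal.Quotient.isPrincipal_top {R : Type*} [CommRing R] (I : Ideal R) :
    (⊤ : Submodule R (R ⧸ I)).IsPrincipal :=
  ⟨1, (Ideal.Quotient.span_singleton_one I).symm⟩

theorem Submodule.not_isPrincipal_top_prod_self {R A : Type*} [CommRing R] [CommRing A]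
    [Nontrivial A] [Algebra R A] : ¬ (⊤ : Submodule R (A × A)).IsPrincipal := by
  rintro ⟨⟨a, b⟩, h⟩
  obtain ⟨r, hr⟩ := mem_span_singleton.mp (h ▸ mem_top (x := ((1 : A), (0 : A))))
  obtain ⟨s, hs⟩ := mem_span_singleton.mp (h ▸ mem_top (x := ((0 : A), (1 : A))))
  simp only [Prod.smul_mk, Prod.mk.injEq] at hr hs
  apply one_ne_zero (α := A)
  calc (1 : A) = (r • a) * (s • b) := by rw [hr.1, hs.2, one_mul]
    _ = (r • b) * (s • a) := by rw [smul_mul_smul, smul_mul_smul, mul_comm a]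
    _ = 0 := by rw [hr.2, zero_mul]

open Real goldenRatio in
theorem eval₂_fib_goldenRatio :
    eval₂ (Int.castRingHom ℝ) (Units.mk0 φ goldenRatio_ne_zero) fib = 0 := by
  simp [fib, goldenRatio_sq]

theorem not_isUnit_fib : ¬ IsUnit fib := fun h ↦
  not_isUnit_zero (eval₂_fib_goldenRatio ▸ h.map (eval₂ _ _))

/-- The `ℤ[t^{±1}]`-module `M = ℤ[t^{±1}]/(t² − t − 1)` is cyclic, its order
ideal (the smallest principal ideal containing the 0th Fitting ideal, which for
a cyclic module is its annihilator) is generated by `t² − t − 1`, and `M ⊕ M`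
is not a cyclic `ℤ[t^{±1}]`-module. -/
theorem stmt_9 :
    (⊤ : Submodule (LaurentPolynomial ℤ)
        (LaurentPolynomial ℤ ⧸ Ideal.span {fib})).IsPrincipal ∧
    Module.annihilator (LaurentPolynomial ℤ)
        (LaurentPolynomial ℤ ⧸ Ideal.span {fib}) = Ideal.span {fib} ∧
    ¬ (⊤ : Submodule (LaurentPolynomial ℤ)
        ((LaurentPolynomial ℤ ⧸ Ideal.span {fib}) ×
          (LaurentPolynomial ℤ ⧸ Ideal.span {fib}))).IsPrincipal := by
  have : Nontrivial (LaurentPolynomial ℤ ⧸ Ideal.span {fib}) :=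
    Ideal.Quotient.nontrivial_iff.mpr (mt Ideal.span_singleton_eq_top.mp not_isUnit_fib)
  exact ⟨Ideal.Quotient.isPrincipal_top _, Ideal.annihilator_quotient,
    Submodule.not_isPrincipal_top_prod_self⟩
end

section
/- In the group with presentation ⟨d | d·d^{u²v} = d^u⟩ where superscripts denote a ℤ²-action by automorphisms (i.e., the ℤ[u^{±1},v^{±1}]-module presented by the relation (1 + u²v − u)·d = 0 after abelianization), the abelianization is ℤ[u^{±1},v^{±1}]/(u²v − u + 1), and this module is not isomorphic to ℤ[u^{±1},v^{±1}]/(uv² − v + 1) as a module over ℤ[u^{±1},v^{±1}]. -/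
/-! Isomorphic cyclic modules `R ⧸ I ≃ R ⧸ J` have the same annihilator, so `I = J`.
But the two ideals differ: the point `(u, v) = (-1, 1)` over `ZMod 3` is a zero of
`u²v − u + 1` while `uv² − v + 1` takes the value `-1` there, so `uv² − v + 1` is not a
multiple of `u²v − u + 1`. -/

theorem Ideal.eq_of_quotient_linearEquiv {R : Type*} [CommRing R] {I J : Ideal R}
    (e : (R ⧸ I) ≃ₗ[R] (R ⧸ J)) : I = J := by
  simpa only [Ideal.annihilator_quotient] using e.annihilator_eq

theorem Ideal.notMem_span_singleton_of_map_eq_zero {R S F : Type*} [CommSemiring R]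
    [CommSemiring S] [FunLike F R S] [MulHomClass F R S] (f : F) {p q : R}
    (hp : f p = 0) (hq : f q ≠ 0) : q ∉ Ideal.span {p} := fun hpq ↦
  hq <| zero_dvd_iff.mp (hp ▸ map_dvd f (Ideal.mem_span_singleton.mp hpq))

namespace Laurent2

noncomputable def eval {S : Type*} [CommRing S] (a b : Sˣ) : Laurent2 →ₐ[ℤ] S :=
  AddMonoidAlgebra.lift ℤ S (ℤ × ℤ) <| (Units.coeHom S).comp
    { toFun := fun m ↦ a ^ (Multiplicative.toAdd m).1 * b ^ (Multiplicative.toAdd m).2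
      map_one' := by simp
      map_mul' := fun x y ↦ by
        simp only [toAdd_mul, Prod.fst_add, Prod.snd_add, zpow_add]
        exact mul_mul_mul_comm _ _ _ _ }

theorem eval_mono {S : Type*} [CommRing S] (a b : Sˣ) (i j : ℤ) :
    eval a b (mono i j) = ↑(a ^ i * b ^ j) := by
  simp [eval, mono, AddMonoidAlgebra.lift_single]

end Laurent2

/-- The abelianization of `⟨d ∣ d·d^{u²v} = d^u⟩` is the cyclic module
`ℤ[u^{±1},v^{±1}]/(u²v − u + 1)`, and it is not isomorphic to
`ℤ[u^{±1},v^{±1}]/(uv² − v + 1)` as a `ℤ[u^{±1},v^{±1}]`-module. -/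
theorem stmt_12 :
    ¬ Nonempty ((Laurent2 ⧸ Ideal.span {mono 2 1 - mono 1 0 + 1}) ≃ₗ[Laurent2]
      (Laurent2 ⧸ Ideal.span {mono 1 2 - mono 0 1 + 1})) := by
  rintro ⟨e⟩
  have hroot : Laurent2.eval (S := ZMod 3) (-1) 1 (mono 2 1 - mono 1 0 + 1) = 0 := by
    simp only [map_add, map_sub, map_one, Laurent2.eval_mono]; decide
  have hvalue : Laurent2.eval (S := ZMod 3) (-1) 1 (mono 1 2 - mono 0 1 + 1) ≠ 0 := by
    simp only [map_add, map_sub, map_one, Laurent2.eval_mono]; decide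
  apply Ideal.notMem_span_singleton_of_map_eq_zero _ hroot hvalue
  exact Ideal.eq_of_quotient_linearEquiv e ▸ Ideal.mem_span_singleton_self _
end
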